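/- For all natural numbers $k, t, p$ with $t \ge 1$, $p \ge 1$, and $p \cdot t \le k$, it holds that $\left(\binom{k}{p} - \binom{k-t}{p}\right) \cdot k \ge (1 - e^{-1}) \cdot p \cdot t \cdot \binom{k}{p}$. -/
import Mathlib

open Finset in
lemma descFact_le_aux (k t p : ℕ) (ht : t ≤ k) :
    (k - t).descFactorial p * k ^ p ≤ k.descFactorial p * (k - t) ^ p := by
  calc (k - t).descFactorial p * k ^ p
      = ∏ i ∈ range p, (k - t - i) * k := by
        rw [Nat.descFactorial_eq_prod_range, prod_mul_distrib, prod_const, card_range]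
    _ ≤ ∏ i ∈ range p, (k - i) * (k - t) := by
        apply Finset.prod_le_prod'
        intro i _
        by_cases h : t + i ≤ k
        · have h1 : i ≤ k - t := by omega
          have h2 : i ≤ k := by omega
          rw [Nat.sub_sub]
          zify [h, h2, ht]
          nlinarith [mul_nonneg (Int.ofNat_nonneg i) (Int.ofNat_nonneg t)]
        · have : k - t - i = 0 := by omega
          simp [this]
    _ = k.descFactorial p * (k - t) ^ p := by
        rw [Nat.descFactorial_eq_prod_range, prod_mul_distrib, prod_const, card_range]

lemma choose_mul_pow_le (k t p : ℕ) (ht : t ≤ k) :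
    (k - t).choose p * k ^ p ≤ k.choose p * (k - t) ^ p := by
  have h := descFact_le_aux k t p ht
  rw [Nat.descFactorial_eq_factorial_mul_choose, Nat.descFactorial_eq_factorial_mul_choose] at h
  rw [mul_assoc, mul_assoc] at h
  exact Nat.le_of_mul_le_mul_left h (Nat.factorial_pos p)

theorem choose_diff_ge (k t p : ℕ) (ht : 1 ≤ t) (hp : 1 ≤ p) (hpt : p * t ≤ k) :
    ((k.choose p : ℝ) - ((k - t).choose p : ℝ)) * k ≥
      (1 - Real.exp (-1)) * p * t * k.choose p := by
  have htk : t ≤ k := le_trans (Nat.le_mul_of_pos_left t hp) hpt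
  have hk : 0 < k := lt_of_lt_of_le (Nat.mul_pos hp ht) hpt
  have hkR : (0 : ℝ) < k := by exact_mod_cast hk
  set x : ℝ := (p * t : ℝ) / k with hxdef
  have hx0 : 0 < x := by positivity
  have hx1 : x ≤ 1 := by
    rw [hxdef, div_le_one hkR]
    exact_mod_cast hpt
  -- bound on choose ratio
  have hD : ((k - t).choose p : ℝ) ≤ (k.choose p : ℝ) * (((k : ℝ) - t) / k) ^ p := by
    have h := choose_mul_pow_le k t p htk
    have h' : ((k - t).choose p : ℝ) * (k : ℝ) ^ p ≤ (k.choose p : ℝ) * ((k : ℝ) - t) ^ p := by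
      have := (Nat.cast_le (α := ℝ)).2 h
      push_cast [Nat.cast_sub htk] at this
      convert this using 2 <;> push_cast [Nat.cast_sub htk] <;> ring
    rw [div_pow, ← mul_div_assoc, le_div_iff₀ (by positivity)]
    exact h'
  have hratio : (((k : ℝ) - t) / k) ^ p ≤ Real.exp (-x) := by
    have h1 : ((k : ℝ) - t) / k ≤ Real.exp (-(t / k)) := by
      have := Real.add_one_le_exp (-(t / k : ℝ))
      have : 1 - (t : ℝ) / k ≤ Real.exp (-(t / k)) := by linarith
      calc ((k : ℝ) - t) / k = 1 - (t : ℝ) / k := by field_simp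
        _ ≤ _ := this
    have h0 : 0 ≤ ((k : ℝ) - t) / k := by
      apply div_nonneg _ hkR.le
      have : (t : ℝ) ≤ k := by exact_mod_cast htk
      linarith
    calc (((k : ℝ) - t) / k) ^ p ≤ Real.exp (-(t / k)) ^ p :=
          pow_le_pow_left₀ h0 h1 p
      _ = Real.exp (p * (-(t / k))) := by rw [← Real.exp_nat_mul]
      _ = Real.exp (-x) := by rw [hxdef]; ring_nf
  -- convexity bound : exp(-x) ≤ 1 - (1 - exp(-1)) x  for x ∈ [0,1]
  have hconv : Real.exp (-x) ≤ 1 - (1 - Real.exp (-1)) * x := by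
    have h := convexOn_exp.2 (Set.mem_univ (0 : ℝ)) (Set.mem_univ (-1 : ℝ))
      (by linarith : (0:ℝ) ≤ 1 - x) hx0.le (by ring)
    simp only [smul_eq_mul, mul_zero, mul_neg_one, zero_add, Real.exp_zero] at h
    linarith
  have hC : (0 : ℝ) ≤ (k.choose p : ℝ) := Nat.cast_nonneg _
  have key : ((k.choose p : ℝ) - ((k - t).choose p : ℝ)) ≥ (1 - Real.exp (-1)) * x * k.choose p := by
    have h2 : ((k - t).choose p : ℝ) ≤ (k.choose p : ℝ) * (1 - (1 - Real.exp (-1)) * x) := by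
      calc ((k - t).choose p : ℝ) ≤ (k.choose p : ℝ) * (((k : ℝ) - t) / k) ^ p := hD
        _ ≤ (k.choose p : ℝ) * Real.exp (-x) := by
            exact mul_le_mul_of_nonneg_left hratio hC
        _ ≤ (k.choose p : ℝ) * (1 - (1 - Real.exp (-1)) * x) :=
            mul_le_mul_of_nonneg_left hconv hC
    nlinarith
  have hxk : x * k = (p : ℝ) * t := by
    rw [hxdef]; field_simp
  calc ((k.choose p : ℝ) - ((k - t).choose p : ℝ)) * k
      ≥ ((1 - Real.exp (-1)) * x * k.choose p) * k := by
        apply mul_le_mul_of_nonneg_right key hkR.le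
    _ = (1 - Real.exp (-1)) * p * t * k.choose p := by
        rw [show ((1 - Real.exp (-1)) * x * ↑(k.choose p)) * k = (1 - Real.exp (-1)) * (x * k) * k.choose p by ring, hxk]; ring
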